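/- arXiv:1212.3726 — 2 statements merged into one kernel-verified Lean document; each statement's English description precedes it below -/
import Mathlib

section
/- Let K be a field and I = (x_1^2 x_2, x_2^2 x_3, x_1 x_3^2) ⊆ K[x_1, x_2, x_3]. Every polynomial in I that is a product of three linear forms is a scalar multiple of one of the three generators x_1^2 x_2, x_2^2 x_3, x_1 x_3^2. -/
/-!
A cubic form lying in a monomial ideal generated by cubic monomials is a linear combination of
the generators, so `p = A x₀²x₁ + B x₁²x₂ + C x₀x₂²`. Writing `p` as a product of three linear
forms, the vanishing of its coefficients at `x₀³`, `x₁³` and `x₀x₁²` forces `A B = 0`, and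
cyclically `B C = C A = 0`; hence at most one of `A`, `B`, `C` is nonzero.
-/

open MvPolynomial

theorem Finsupp.eq_of_le_of_degree_eq {σ : Type*} {d m : σ →₀ ℕ} (hle : d ≤ m)
    (hdeg : d.degree = m.degree) : d = m := by
  obtain ⟨e, rfl⟩ := le_iff_exists_add.mp hle
  simpa [Finsupp.degree_eq_zero_iff] using hdeg

theorem Multiset.degree_toFinsupp {σ : Type*} [DecidableEq σ] (s : Multiset σ) :
    (Multiset.toFinsupp s).degree = Multiset.card s :=
  Multiset.toFinsupp_sum_eq s

namespace MvPolynomial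

variable {σ R : Type*} [CommSemiring R]

noncomputable def linearForm [Fintype σ] (u : σ → R) : MvPolynomial σ R := ∑ i, C (u i) * X i

theorem IsHomogeneous.support_subset_of_mem_span_monomial {p : MvPolynomial σ R} {n : ℕ}
    {s : Set (σ →₀ ℕ)} (hp : p.IsHomogeneous n) (hs : ∀ d ∈ s, d.degree = n)
    (hps : p ∈ Ideal.span ((fun d => monomial d (1 : R)) '' s)) : ↑p.support ⊆ s := by
  intro m hm
  obtain ⟨d, hd, hdm⟩ := mem_ideal_span_monomial_image.mp hps m hm
  have hm_deg : m.degree = n := by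
    rw [Finsupp.degree_eq_weight_one]
    exact hp (mem_support_iff.mp hm)
  rwa [← Finsupp.eq_of_le_of_degree_eq hdm (by rw [hs d hd, hm_deg])]

theorem monomial_toFinsupp_one [DecidableEq σ] (s : Multiset σ) :
    monomial (Multiset.toFinsupp s) (1 : R) = (s.map X).prod := by
  induction s using Multiset.induction with
  | empty => simp
  | cons i s ih =>
    rw [← Multiset.singleton_add, Multiset.toFinsupp_add, Multiset.toFinsupp_singleton,
      monomial_single_add, ih]
    simp

theorem eq_sum_smul_prod_X_of_support_subset [DecidableEq σ] {p : MvPolynomial σ R}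
    {G : Finset (Multiset σ)} (h : p.support ⊆ G.image Multiset.toFinsupp) :
    p = ∑ g ∈ G, coeff (Multiset.toFinsupp g) p • (g.map X).prod := by
  conv_lhs => rw [as_sum p, Finset.sum_subset h fun d _ hd => by
    rw [notMem_support_iff.mp hd, monomial_zero]]
  rw [Finset.sum_image (by simp)]
  simp only [← monomial_toFinsupp_one, smul_monomial, smul_eq_mul, mul_one]

theorem IsHomogeneous.eq_linearForm [Fintype σ] {l : MvPolynomial σ R}
    (hl : l.IsHomogeneous 1) : l = linearForm fun i => coeff (Finsupp.single i 1) l := by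
  classical
  ext m
  simp only [linearForm, coeff_sum, coeff_C_mul, coeff_X]
  by_cases hm : m.degree = 1
  · obtain ⟨i, hi⟩ := Multiset.card_eq_one.mp <|
      (Finsupp.card_toMultiset m).trans (by rw [← hm, Finsupp.degree_apply]; rfl)
    rw [← Finsupp.toMultiset_toFinsupp m, hi, Multiset.toFinsupp_singleton]
    simp [Finsupp.single_left_inj]
  · rw [hl.coeff_eq_zero hm]
    refine (Finset.sum_eq_zero fun i _ => ?_).symm
    rw [if_neg (by rintro rfl; simp at hm), mul_zero]

theorem coeff_toFinsupp_linearForm_mul_linearForm_mul_linearForm [Fintype σ] [DecidableEq σ]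
    (u v w : σ → R) (s : Multiset σ) :
    coeff (Multiset.toFinsupp s) (linearForm u * linearForm v * linearForm w) =
      ∑ i, ∑ j, ∑ k, if {i, j, k} = s then u i * v j * w k else 0 := by
  have hX (i j k : σ) : X i * X j * X k = monomial (Multiset.toFinsupp {i, j, k}) (1 : R) := by
    simp [monomial_toFinsupp_one, mul_assoc]
  rw [linearForm, linearForm, linearForm, Finset.sum_mul_sum, Finset.sum_mul]
  simp_rw [Finset.sum_mul_sum, coeff_sum]
  refine Fintype.sum_congr _ _ fun i => Fintype.sum_congr _ _ fun j =>
    Fintype.sum_congr _ _ fun k => ?_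
  rw [show C (u i) * X i * (C (v j) * X j) * (C (w k) * X k) =
      C (u i * v j * w k) * (X i * X j * X k) by simp only [map_mul]; ring, hX,
    coeff_C_mul, coeff_monomial]
  simp [Multiset.toFinsupp.injective.eq_iff]

end MvPolynomial

/-- For linear forms with coefficient vectors `u`, `v`, `w`, the hypotheses and the two factors
are the coefficients of `x³`, `y³`, `xy²`, `x²y` and `y²z` in their product. -/
theorem mixed_mul_mixed_eq_zero {R σ : Type*} [CommRing R] [NoZeroDivisors R]
    (u v w : σ → R) (x y z : σ) (hx : u x * v x * w x = 0) (hy : u y * v y * w y = 0)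
    (hxyy : u x * v y * w y + u y * v x * w y + u y * v y * w x = 0) :
    (u x * v x * w y + u x * v y * w x + u y * v x * w x) *
      (u y * v y * w z + u y * v z * w y + u z * v y * w y) = 0 := by
  simp only [mul_eq_zero] at hx hy
  -- Once a factor without `x` and one without `y` are fixed, either the first factor of the
  -- goal vanishes or `hxyy` becomes a single monomial dividing the goal.
  rcases hx with (hx | hx) | hx <;> rcases hy with (hy | hy) | hy <;>
    simp only [hx, hy] at hxyy ⊢ <;> grind

theorem exists_eq_smul_of_eq_add_smul {R M : Type*} [Semiring R] [NoZeroDivisors R]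
    [AddCommMonoid M] [Module R M] {a b c : R} {x y z m : M} (hab : a * b = 0)
    (hbc : b * c = 0) (hca : c * a = 0) (hm : m = a • x + b • y + c • z) :
    ∃ r : R, m = r • x ∨ m = r • y ∨ m = r • z := by
  subst hm
  rcases eq_or_ne a 0 with rfl | ha
  · rcases eq_or_ne b 0 with rfl | hb
    · exact ⟨c, by simp⟩
    · exact ⟨b, by simp [(mul_eq_zero.mp hbc).resolve_left hb]⟩
  · refine ⟨a, Or.inl ?_⟩
    simp [(mul_eq_zero.mp hab).resolve_left ha, (mul_eq_zero.mp hca).resolve_right ha]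

/-- The exponents of `x₀²x₁`, `x₁²x₂` and `x₀x₂²`; throughout, a monomial of degree `d` is
written as a multiset of `d` variables, which makes comparisons decidable by `decide`. -/
def cyclicExponents : Finset (Multiset (Fin 3)) := {{0, 0, 1}, {1, 1, 2}, {0, 2, 2}}

theorem span_cyclicExponents {R : Type*} [CommSemiring R] :
    Ideal.span {(X 0 : MvPolynomial (Fin 3) R) ^ 2 * X 1, (X 1) ^ 2 * X 2, X 0 * (X 2) ^ 2} =
      Ideal.span ((fun d => monomial d (1 : R)) ''
        ↑(cyclicExponents.image Multiset.toFinsupp)) := by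
  simp [cyclicExponents, Set.image_insert_eq, monomial_toFinsupp_one, pow_two, mul_assoc]

theorem coeff_cyclic_mul_coeff_cyclic_eq_zero {R : Type*} [CommRing R] [NoZeroDivisors R]
    (u v w : Fin 3 → R)
    (hsupp : (linearForm u * linearForm v * linearForm w).support ⊆
      cyclicExponents.image Multiset.toFinsupp) :
    let p := linearForm u * linearForm v * linearForm w
    coeff (Multiset.toFinsupp {0, 0, 1}) p * coeff (Multiset.toFinsupp {1, 1, 2}) p = 0 ∧
      coeff (Multiset.toFinsupp {1, 1, 2}) p * coeff (Multiset.toFinsupp {0, 2, 2}) p = 0 ∧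
      coeff (Multiset.toFinsupp {0, 2, 2}) p * coeff (Multiset.toFinsupp {0, 0, 1}) p = 0 := by
  have hzero (s : Multiset (Fin 3)) (hs : s ∉ cyclicExponents) :
      coeff (Multiset.toFinsupp s) (linearForm u * linearForm v * linearForm w) = 0 :=
    notMem_support_iff.mp fun h => hs (by simpa using hsupp h)
  simp only [coeff_toFinsupp_linearForm_mul_linearForm_mul_linearForm] at hzero ⊢
  have h000 := hzero {0, 0, 0} (by decide)
  have h111 := hzero {1, 1, 1} (by decide)
  have h222 := hzero {2, 2, 2} (by decide)
  have h011 := hzero {0, 1, 1} (by decide)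
  have h122 := hzero {1, 2, 2} (by decide)
  have h002 := hzero {0, 0, 2} (by decide)
  simp +decide only [Fin.sum_univ_three, if_true, if_false, add_zero, zero_add, ← add_assoc]
    at h000 h111 h222 h011 h122 h002 ⊢
  refine ⟨mixed_mul_mixed_eq_zero u v w 0 1 2 h000 h111 h011, ?_, ?_⟩
  · linear_combination mixed_mul_mixed_eq_zero u v w 1 2 0 h111 h222 h122
  · linear_combination mixed_mul_mixed_eq_zero u v w 2 0 1 h222 h000 (by linear_combination h002)

theorem stmt10 {K : Type*} [Field K] (p : MvPolynomial (Fin 3) K)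
    (hp : p ∈ Ideal.span {(X 0) ^ 2 * X 1, (X 1) ^ 2 * X 2, X 0 * (X 2) ^ 2})
    (hprod : ∃ l₁ l₂ l₃ : MvPolynomial (Fin 3) K,
      l₁.IsHomogeneous 1 ∧ l₂.IsHomogeneous 1 ∧ l₃.IsHomogeneous 1 ∧ p = l₁ * l₂ * l₃) :
    ∃ c : K, p = c • ((X 0) ^ 2 * X 1) ∨ p = c • ((X 1) ^ 2 * X 2) ∨
      p = c • (X 0 * (X 2) ^ 2) := by
  obtain ⟨l₁, l₂, l₃, hl₁, hl₂, hl₃, rfl⟩ := hprod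
  rw [span_cyclicExponents] at hp
  have hsupp : (l₁ * l₂ * l₃).support ⊆ cyclicExponents.image Multiset.toFinsupp :=
    Finset.coe_subset.mp <| ((hl₁.mul hl₂).mul hl₃).support_subset_of_mem_span_monomial
      (by simp [Multiset.degree_toFinsupp, cyclicExponents]) hp
  have hsum := eq_sum_smul_prod_X_of_support_subset hsupp
  rw [cyclicExponents, Finset.sum_insert (by decide), Finset.sum_insert (by decide),
    Finset.sum_singleton, ← add_assoc] at hsum
  rw [hl₁.eq_linearForm, hl₂.eq_linearForm, hl₃.eq_linearForm] at hsupp hsum ⊢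
  obtain ⟨hAB, hBC, hCA⟩ := coeff_cyclic_mul_coeff_cyclic_eq_zero _ _ _ hsupp
  obtain ⟨c, hc⟩ := exists_eq_smul_of_eq_add_smul hAB hBC hCA hsum
  exact ⟨c, by simpa [pow_two, mul_assoc] using hc⟩
end

section
/- Let K be a field and I = (x_1^2 x_2, x_2^2 x_3, x_1 x_3^2) ⊆ K[x_1, x_2, x_3]. Then I does not contain a regular sequence f, g of length two in which each of f and g is a product of three linear forms. -/
/-!
A product of three linear forms lying in the monomial ideal `(x₀²x₁, x₁²x₂, x₀x₂²)` is a scalar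
multiple of one of its three generators: its coefficients at the seven cubic monomials outside
the ideal vanish, and restricting to a coordinate plane shows that a binary cubic with vanishing
`x³`, `y³` and `xy²` coefficients is a multiple of `x²y`, which forces two of the three remaining
coefficients to vanish. Each generator is divisible by two of the three variables, so any two of
them share a variable, and elements with a common non-unit factor never form a regular sequence.
-/

open MvPolynomial

open Pointwise in
theorem RingTheory.Sequence.not_isWeaklyRegular_pair_of_dvd {R : Type*} [CommRing R] {d f g : R}
    (hd : ¬IsUnit d) (hdf : d ∣ f) (hdg : d ∣ g) :
    ¬IsWeaklyRegular R [f, g] := by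
  obtain ⟨u, rfl⟩ := hdf
  obtain ⟨w, rfl⟩ := hdg
  intro hreg
  simp only [isWeaklyRegular_cons_iff] at hreg
  obtain ⟨hf, hg, -⟩ := hreg
  -- `g u = f w` lies in `(f)`, so `u = f k` since `g` is regular mod `f`; then `f (1 - d k) = 0`
  have hu : u ∈ (d * u) • (⊤ : Submodule R R) :=
    mem_of_isSMulRegular_quotient_of_smul_mem hg <| by
      simpa [smul_eq_mul, mul_left_comm, mul_comm] using
        Submodule.smul_mem_pointwise_smul w (d * u) ⊤ trivial
  obtain ⟨k, -, hk⟩ := (Submodule.mem_smul_pointwise_iff_exists _ _ _).mp hu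
  refine hd (IsUnit.of_mul_eq_one k (sub_eq_zero.mp (hf.right_eq_zero_of_smul ?_)).symm)
  rw [smul_eq_mul] at hk ⊢
  linear_combination -d * hk

theorem MvPolynomial.not_isUnit_X {σ R : Type*} [CommSemiring R] [Nontrivial R] (i : σ) :
    ¬IsUnit (X i : MvPolynomial σ R) :=
  fun h => by simpa using h.map (constantCoeff : MvPolynomial σ R →+* R)

lemma MvPolynomial.coeff_eq_zero_of_mem_ideal_span_monomial_image {σ R : Type*} [CommSemiring R]
    {S : Set (σ →₀ ℕ)} {f : MvPolynomial σ R} (hf : f ∈ Ideal.span ((fun s => monomial s (1 : R)) '' S))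
    {μ : σ →₀ ℕ} (hμ : ∀ s ∈ S, ¬s ≤ μ) : coeff μ f = 0 := by
  by_contra h
  obtain ⟨s, hs, hle⟩ := mem_ideal_span_monomial_image.mp hf μ (mem_support_iff.mpr h)
  exact hμ s hs hle

theorem MvPolynomial.IsHomogeneous.exists_eq_sum_C_mul_X {σ R : Type*} [Fintype σ]
    [CommSemiring R] {p : MvPolynomial σ R} (hp : p.IsHomogeneous 1) :
    ∃ a : σ → R, p = ∑ i, C (a i) * X i := by
  classical
  refine ⟨fun i => coeff (Finsupp.single i 1) p, ?_⟩
  ext m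
  simp only [coeff_sum, coeff_C_mul, coeff_X, mul_ite, mul_one, mul_zero]
  by_cases hm : m.degree = 1
  · obtain ⟨j, rfl⟩ : m ∈ Set.range fun j => Finsupp.single j 1 := by
      rwa [Finsupp.range_single_one]
    simp [Finsupp.single_left_inj]
  · rw [hp.coeff_eq_zero hm, Finset.sum_eq_zero]
    rintro i -
    rw [if_neg]
    rintro rfl
    simp at hm

lemma MvPolynomial.exists_eq_monomial_of_mul_eq_zero {σ R : Type*} [CommSemiring R]
    [NoZeroDivisors R] (s t u : σ →₀ ℕ) {A B C : R}
    (hAB : A * B = 0) (hBC : B * C = 0) (hCA : C * A = 0) :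
    ∃ v ∈ ({s, t, u} : Set (σ →₀ ℕ)), ∃ r,
      monomial s A + monomial t B + monomial u C = monomial v r := by
  rcases eq_or_ne A 0 with rfl | hA
  · rcases eq_or_ne B 0 with rfl | hB
    · exact ⟨u, by simp, C, by simp⟩
    · obtain rfl : C = 0 := (mul_eq_zero.mp hBC).resolve_left hB
      exact ⟨t, by simp, B, by simp⟩
  · obtain rfl : B = 0 := (mul_eq_zero.mp hAB).resolve_left hA
    obtain rfl : C = 0 := (mul_eq_zero.mp hCA).resolve_right hA
    exact ⟨s, by simp, A, by simp⟩

-- With `l = ∑ aᵢxᵢ`, `l' = ∑ bᵢxᵢ`, `l'' = ∑ cᵢxᵢ`: if `l l' l''` has no `x₀³`, `x₁³` and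
-- `x₀x₁²` terms, then on `x₂ = 0` it is a multiple of `x₀²x₁`; either the multiple vanishes or
-- two factors are multiples of `x₀`, which kills the `x₁²x₂` coefficient.
lemma cyclic_coeff_mul_eq_zero {R : Type*} [CommRing R] [NoZeroDivisors R]
    (a₀ a₁ a₂ b₀ b₁ b₂ c₀ c₁ c₂ : R)
    (h₁ : a₀ * b₀ * c₀ = 0) (h₂ : a₁ * b₁ * c₁ = 0)
    (h₃ : a₀ * b₁ * c₁ + a₁ * b₀ * c₁ + a₁ * b₁ * c₀ = 0) :
    (a₀ * b₀ * c₁ + a₀ * b₁ * c₀ + a₁ * b₀ * c₀) *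
      (a₁ * b₁ * c₂ + a₁ * b₂ * c₁ + a₂ * b₁ * c₁) = 0 := by
  simp only [mul_eq_zero] at h₁ h₂
  rcases h₁ with (rfl | rfl) | rfl <;> rcases h₂ with (rfl | rfl) | rfl <;> grind

noncomputable def exp3 (p q r : ℕ) : Fin 3 →₀ ℕ :=
  Finsupp.single 0 p + Finsupp.single 1 q + Finsupp.single 2 r

@[simp] lemma exp3_apply_zero (p q r : ℕ) : exp3 p q r 0 = p := by simp [exp3]
@[simp] lemma exp3_apply_one (p q r : ℕ) : exp3 p q r 1 = q := by simp [exp3]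
@[simp] lemma exp3_apply_two (p q r : ℕ) : exp3 p q r 2 = r := by simp [exp3]

lemma exp3_le_exp3 {p q r p' q' r' : ℕ} :
    exp3 p q r ≤ exp3 p' q' r' ↔ p ≤ p' ∧ q ≤ q' ∧ r ≤ r' := by
  simp [Finsupp.le_def, Fin.forall_fin_succ]

lemma exp3_inj {p q r p' q' r' : ℕ} :
    exp3 p q r = exp3 p' q' r' ↔ p = p' ∧ q = q' ∧ r = r' := by
  simp [Finsupp.ext_iff, Fin.forall_fin_succ]

lemma monomial_exp3 {R : Type*} [CommSemiring R] (p q r : ℕ) (a : R) :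
    monomial (exp3 p q r) a = C a * X 0 ^ p * X 1 ^ q * X 2 ^ r := by
  simp only [X_pow_eq_monomial, C_mul_monomial, monomial_mul, mul_one, exp3]

def cyclicExps : Set (Fin 3 →₀ ℕ) := {exp3 2 1 0, exp3 0 2 1, exp3 1 0 2}

lemma span_cyclic_eq {R : Type*} [CommSemiring R] :
    Ideal.span {X 0 ^ 2 * X 1, X 1 ^ 2 * X 2, X 0 * X 2 ^ 2} =
      Ideal.span ((fun s => monomial s (1 : R)) '' cyclicExps) := by
  simp [cyclicExps, Set.image_insert_eq, monomial_exp3]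

lemma linear_mul_linear_mul_linear {R : Type*} [CommSemiring R] (a b c : Fin 3 → R) :
    (∑ i, C (a i) * X i) * (∑ i, C (b i) * X i) * (∑ i, C (c i) * X i) =
      monomial (exp3 3 0 0) (a 0 * b 0 * c 0) + monomial (exp3 0 3 0) (a 1 * b 1 * c 1) +
      monomial (exp3 0 0 3) (a 2 * b 2 * c 2) +
      monomial (exp3 1 2 0) (a 0 * b 1 * c 1 + a 1 * b 0 * c 1 + a 1 * b 1 * c 0) +
      monomial (exp3 0 1 2) (a 1 * b 2 * c 2 + a 2 * b 1 * c 2 + a 2 * b 2 * c 1) +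
      monomial (exp3 2 0 1) (a 2 * b 0 * c 0 + a 0 * b 2 * c 0 + a 0 * b 0 * c 2) +
      monomial (exp3 1 1 1) (a 0 * b 1 * c 2 + a 0 * b 2 * c 1 + a 1 * b 0 * c 2 +
        a 1 * b 2 * c 0 + a 2 * b 0 * c 1 + a 2 * b 1 * c 0) +
      monomial (exp3 2 1 0) (a 0 * b 0 * c 1 + a 0 * b 1 * c 0 + a 1 * b 0 * c 0) +
      monomial (exp3 0 2 1) (a 1 * b 1 * c 2 + a 1 * b 2 * c 1 + a 2 * b 1 * c 1) +
      monomial (exp3 1 0 2) (a 2 * b 2 * c 0 + a 2 * b 0 * c 2 + a 0 * b 2 * c 2) := by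
  simp only [Fin.sum_univ_three, monomial_exp3, map_add, map_mul]
  ring

theorem exists_eq_monomial_of_mul_mul_mem {R : Type*} [CommRing R] [NoZeroDivisors R]
    {l₁ l₂ l₃ : MvPolynomial (Fin 3) R}
    (h₁ : l₁.IsHomogeneous 1) (h₂ : l₂.IsHomogeneous 1) (h₃ : l₃.IsHomogeneous 1)
    (hmem : l₁ * l₂ * l₃ ∈ Ideal.span ((fun s => monomial s (1 : R)) '' cyclicExps)) :
    ∃ s ∈ cyclicExps, ∃ r, l₁ * l₂ * l₃ = monomial s r := by
  obtain ⟨a, rfl⟩ := h₁.exists_eq_sum_C_mul_X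
  obtain ⟨b, rfl⟩ := h₂.exists_eq_sum_C_mul_X
  obtain ⟨c, rfl⟩ := h₃.exists_eq_sum_C_mul_X
  rw [linear_mul_linear_mul_linear] at hmem ⊢
  have hcoeff (p q r : ℕ) (h : ¬(2 ≤ p ∧ 1 ≤ q) ∧ ¬(2 ≤ q ∧ 1 ≤ r) ∧ ¬(1 ≤ p ∧ 2 ≤ r)) :=
    coeff_eq_zero_of_mem_ideal_span_monomial_image (μ := exp3 p q r) hmem
      (by simpa [cyclicExps, exp3_le_exp3] using h)
  have h300 : a 0 * b 0 * c 0 = 0 := by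
    simpa [coeff_monomial, exp3_inj] using hcoeff 3 0 0 (by decide)
  have h030 : a 1 * b 1 * c 1 = 0 := by
    simpa [coeff_monomial, exp3_inj] using hcoeff 0 3 0 (by decide)
  have h003 : a 2 * b 2 * c 2 = 0 := by
    simpa [coeff_monomial, exp3_inj] using hcoeff 0 0 3 (by decide)
  have h120 : a 0 * b 1 * c 1 + a 1 * b 0 * c 1 + a 1 * b 1 * c 0 = 0 := by
    simpa [coeff_monomial, exp3_inj] using hcoeff 1 2 0 (by decide)
  have h012 : a 1 * b 2 * c 2 + a 2 * b 1 * c 2 + a 2 * b 2 * c 1 = 0 := by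
    simpa [coeff_monomial, exp3_inj] using hcoeff 0 1 2 (by decide)
  have h201 : a 2 * b 0 * c 0 + a 0 * b 2 * c 0 + a 0 * b 0 * c 2 = 0 := by
    simpa [coeff_monomial, exp3_inj] using hcoeff 2 0 1 (by decide)
  have h111 : a 0 * b 1 * c 2 + a 0 * b 2 * c 1 + a 1 * b 0 * c 2 +
      a 1 * b 2 * c 0 + a 2 * b 0 * c 1 + a 2 * b 1 * c 0 = 0 := by
    simpa [coeff_monomial, exp3_inj] using hcoeff 1 1 1 (by decide)
  rw [h300, h030, h003, h120, h012, h201, h111]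
  simp only [monomial_zero, zero_add]
  exact exists_eq_monomial_of_mul_eq_zero _ _ _
    (cyclic_coeff_mul_eq_zero (a 0) (a 1) (a 2) (b 0) (b 1) (b 2) (c 0) (c 1) (c 2) h300 h030 h120)
    (cyclic_coeff_mul_eq_zero (a 1) (a 2) (a 0) (b 1) (b 2) (b 0) (c 1) (c 2) (c 0) h030 h003 h012)
    (cyclic_coeff_mul_eq_zero (a 2) (a 0) (a 1) (b 2) (b 0) (b 1) (c 2) (c 0) (c 1) h003 h300 h201)

lemma exists_ne_zero_ne_zero_of_mem_cyclicExps {s t : Fin 3 →₀ ℕ} (hs : s ∈ cyclicExps)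
    (ht : t ∈ cyclicExps) : ∃ i, s i ≠ 0 ∧ t i ≠ 0 := by
  simp only [cyclicExps, Set.mem_insert_iff, Set.mem_singleton_iff] at hs ht
  rcases hs with rfl | rfl | rfl <;> rcases ht with rfl | rfl | rfl <;> simp [Fin.exists_fin_succ]

theorem stmt11 {K : Type*} [Field K] :
    ¬ ∃ f g : MvPolynomial (Fin 3) K,
      f ∈ Ideal.span {(X 0) ^ 2 * X 1, (X 1) ^ 2 * X 2, X 0 * (X 2) ^ 2} ∧
      g ∈ Ideal.span {(X 0 : MvPolynomial (Fin 3) K) ^ 2 * X 1, (X 1) ^ 2 * X 2,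
        X 0 * (X 2) ^ 2} ∧
      (∃ l₁ l₂ l₃ : MvPolynomial (Fin 3) K,
        l₁.IsHomogeneous 1 ∧ l₂.IsHomogeneous 1 ∧ l₃.IsHomogeneous 1 ∧ f = l₁ * l₂ * l₃) ∧
      (∃ q₁ q₂ q₃ : MvPolynomial (Fin 3) K,
        q₁.IsHomogeneous 1 ∧ q₂.IsHomogeneous 1 ∧ q₃.IsHomogeneous 1 ∧ g = q₁ * q₂ * q₃) ∧
      RingTheory.Sequence.IsRegular (MvPolynomial (Fin 3) K) [f, g] := by
  rintro ⟨f, g, hf, hg, ⟨l₁, l₂, l₃, hl₁, hl₂, hl₃, rfl⟩, ⟨q₁, q₂, q₃, hq₁, hq₂, hq₃, rfl⟩, hreg⟩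
  rw [span_cyclic_eq] at hf hg
  obtain ⟨s, hs, a, hfa⟩ := exists_eq_monomial_of_mul_mul_mem hl₁ hl₂ hl₃ hf
  obtain ⟨t, ht, b, hgb⟩ := exists_eq_monomial_of_mul_mul_mem hq₁ hq₂ hq₃ hg
  obtain ⟨i, hsi, hti⟩ := exists_ne_zero_ne_zero_of_mem_cyclicExps hs ht
  refine RingTheory.Sequence.not_isWeaklyRegular_pair_of_dvd (not_isUnit_X i)
    (hfa ▸ X_dvd_monomial.mpr (Or.inr hsi)) (hgb ▸ X_dvd_monomial.mpr (Or.inr hti))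
    hreg.toIsWeaklyRegular
end
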